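/- arXiv:2006.14698 — 6 statements merged into one kernel-verified Lean document; each statement's English description precedes it below -/
import Mathlib

section
/- Let d, h be positive integers, W_x a real d×(1+h) matrix, W_f, W_i, W_m real h×(1+d+h) matrices, and fix s ∈ ℝ^h (the previous hidden state) and c ∈ ℝ^h (the previous cell state). Define the output map g : ℝ^h → ℝ^d by g(u) = tanh applied entrywise to W_x·(1,u), and the cell-update map Φ : ℝ^d → ℝ^h by Φ(x) = σ_s(W_f·(1,x,s)) ⊙ c + σ_s(W_i·(1,x,s)) ⊙ tanh(W_m·(1,x,s)), where σ_s(t) = 1/(1+e^{−t}) and tanh are applied entrywise and ⊙ is the entrywise product. Set K = ‖W_f‖·‖c‖_∞ + ‖W_i‖ + ‖W_m‖ and assume K > 0 and ‖W_x‖ > 0. Then for any λ ∈ ℝ and any s_t, s_t' ∈ ℝ^h and x, x' ∈ ℝ^d such that ‖g(s_t) − g(s_t')‖_∞ ≥ e^{λ}·‖x − x'‖_∞, one has ‖s_t − s_t'‖_∞ ≥ (e^{λ}/(‖W_x‖·K))·‖Φ(x) − Φ(x')‖_∞. -/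
open scoped BigOperators

/-- The operator norm of a real matrix induced by the sup norms, i.e. the
maximum absolute row sum `max_i Σ_j |W i j|`. -/
noncomputable def supRowSum {m n : ℕ} (W : Matrix (Fin m) (Fin n) ℝ) : ℝ :=
  ⨆ i, ∑ j, |W i j|

/-- The logistic sigmoid `σ_s(t) = 1/(1+e^{-t})`. -/
noncomputable def sigmoid (t : ℝ) : ℝ := 1 / (1 + Real.exp (-t))

/-- The vector `(1, u) ∈ ℝ^{1+h}` obtained by prepending the constant entry 1. -/
def oneVec {h : ℕ} (u : Fin h → ℝ) : Fin (1 + h) → ℝ :=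
  Fin.append ![(1 : ℝ)] u

/-- The vector `(1, x, s) ∈ ℝ^{1+d+h}` obtained by concatenating 1, x and s. -/
def oneVec2 {d h : ℕ} (x : Fin d → ℝ) (s : Fin h → ℝ) : Fin (1 + d + h) → ℝ :=
  Fin.append (Fin.append ![(1 : ℝ)] x) s


/-!
The output map `g` is `‖W_x‖`-Lipschitz and the cell update `Φ` is `K`-Lipschitz for the sup norms:
`tanh` and `σ_s` are 1-Lipschitz and bounded by 1, so each gated product `σ_s(a) ⊙ tanh(m)` moves by
at most the sum of the moves of its pre-activations, and prepending constant entries does not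
increase distances. Chaining `e^λ ‖x - x'‖ ≤ ‖g s_t - g s_t'‖ ≤ ‖W_x‖ ‖s_t - s_t'‖` with
`‖Φ x - Φ x'‖ ≤ K ‖x - x'‖` gives the claim.
-/

namespace Real

theorem hasDerivAt_tanh (x : ℝ) : HasDerivAt tanh (cosh x ^ 2)⁻¹ x := by
  rw [funext tanh_eq_sinh_div_cosh]
  exact ((hasDerivAt_sinh x).div (hasDerivAt_cosh x) (cosh_pos x).ne').congr_deriv
    (by rw [← pow_two, ← pow_two, cosh_sq_sub_sinh_sq, one_div])

theorem lipschitzWith_tanh : LipschitzWith 1 tanh :=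
  lipschitzWith_of_nnnorm_deriv_le (fun x => (hasDerivAt_tanh x).differentiableAt) fun x => by
    rw [(hasDerivAt_tanh x).deriv, ← NNReal.coe_le_coe, coe_nnnorm, norm_inv, norm_pow,
      norm_eq_abs, abs_of_pos (cosh_pos x), NNReal.coe_one]
    exact inv_le_one_of_one_le₀ (one_le_pow₀ (one_le_cosh x))

theorem lipschitzWith_sigmoid : LipschitzWith 1 sigmoid :=
  lipschitzWith_of_nnnorm_deriv_le differentiable_sigmoid fun x => by
    have h0 := sigmoid_nonneg x
    have h1 := sigmoid_le_one x
    rw [deriv_sigmoid, ← NNReal.coe_le_coe, coe_nnnorm, norm_eq_abs, NNReal.coe_one,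
      abs_of_nonneg (mul_nonneg h0 (by linarith))]
    nlinarith

end Real

theorem sigmoid_eq_real_sigmoid : sigmoid = Real.sigmoid :=
  funext fun _ => one_div _

theorem lipschitzWith_sigmoid : LipschitzWith 1 sigmoid :=
  sigmoid_eq_real_sigmoid ▸ Real.lipschitzWith_sigmoid

theorem abs_sigmoid_le_one (t : ℝ) : |sigmoid t| ≤ 1 := by
  rw [sigmoid_eq_real_sigmoid, abs_of_nonneg (Real.sigmoid_nonneg t)]
  exact Real.sigmoid_le_one t

theorem abs_sub_le_of_lipschitzWith_one {f : ℝ → ℝ} (hf : LipschitzWith 1 f) (a b : ℝ) :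
    |f a - f b| ≤ |a - b| := by
  simpa [Real.dist_eq] using hf.dist_le_mul a b

theorem abs_mul_sub_mul_le_of_abs_le_one {p p' q q' : ℝ} (hq : |q| ≤ 1) (hp' : |p'| ≤ 1) :
    |p * q - p' * q'| ≤ |p - p'| + |q - q'| :=
  calc |p * q - p' * q'| = |(p - p') * q + p' * (q - q')| := by ring_nf
    _ ≤ |p - p'| * |q| + |p'| * |q - q'| := by rw [← abs_mul, ← abs_mul]; exact abs_add_le _ _
    _ ≤ |p - p'| + |q - q'| := by
      gcongr
      · exact mul_le_of_le_one_right (abs_nonneg _) hq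
      · exact mul_le_of_le_one_left (abs_nonneg _) hp'

theorem abs_cellUpdate_sub_le (a a' b b' m m' γ : ℝ) :
    |(sigmoid a * γ + sigmoid b * Real.tanh m) - (sigmoid a' * γ + sigmoid b' * Real.tanh m')|
      ≤ |a - a'| * |γ| + |b - b'| + |m - m'| :=
  calc _ = |(sigmoid a - sigmoid a') * γ
          + (sigmoid b * Real.tanh m - sigmoid b' * Real.tanh m')| := by ring_nf
    _ ≤ |sigmoid a - sigmoid a'| * |γ|
          + (|sigmoid b - sigmoid b'| + |Real.tanh m - Real.tanh m'|) := by
        rw [← abs_mul]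
        exact (abs_add_le _ _).trans (add_le_add le_rfl
          (abs_mul_sub_mul_le_of_abs_le_one (Real.abs_tanh_lt_one m).le (abs_sigmoid_le_one b')))
    _ ≤ |a - a'| * |γ| + (|b - b'| + |m - m'|) :=
        add_le_add
          (mul_le_mul_of_nonneg_right
            (abs_sub_le_of_lipschitzWith_one lipschitzWith_sigmoid a a') (abs_nonneg γ))
          (add_le_add (abs_sub_le_of_lipschitzWith_one lipschitzWith_sigmoid b b')
            (abs_sub_le_of_lipschitzWith_one Real.lipschitzWith_tanh m m'))
    _ = _ := by ring

theorem norm_append_sub_append_le {E : Type*} [SeminormedAddCommGroup E] {m n : ℕ}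
    (u u' : Fin m → E) (v v' : Fin n → E) :
    ‖Fin.append u v - Fin.append u' v'‖ ≤ max ‖u - u'‖ ‖v - v'‖ := by
  refine (pi_norm_le_iff_of_nonneg (by positivity)).2 fun j => ?_
  refine Fin.addCases (fun i => ?_) (fun i => ?_) j
  · simpa using (norm_le_pi_norm (u - u') i).trans (le_max_left _ _)
  · simpa using (norm_le_pi_norm (v - v') i).trans (le_max_right _ _)

theorem norm_oneVec_sub_oneVec_le {n : ℕ} (u u' : Fin n → ℝ) :
    ‖oneVec u - oneVec u'‖ ≤ ‖u - u'‖ :=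
  (norm_append_sub_append_le ![(1 : ℝ)] ![1] u u').trans (by simp)

theorem norm_oneVec2_sub_oneVec2_le {d h : ℕ} (x x' : Fin d → ℝ) (s : Fin h → ℝ) :
    ‖oneVec2 x s - oneVec2 x' s‖ ≤ ‖x - x'‖ :=
  calc ‖oneVec2 x s - oneVec2 x' s‖ ≤ max ‖oneVec x - oneVec x'‖ ‖s - s‖ :=
        norm_append_sub_append_le _ _ _ _
    _ = ‖oneVec x - oneVec x'‖ := by simp
    _ ≤ ‖x - x'‖ := norm_oneVec_sub_oneVec_le x x'

section linftyOpNorm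

attribute [local instance] Matrix.linftyOpSeminormedAddCommGroup

theorem supRowSum_eq_linfty_opNorm {m n : ℕ} (W : Matrix (Fin m) (Fin n) ℝ) :
    supRowSum W = ‖W‖ := by
  rw [Matrix.linfty_opNorm_def, Finset.sup_univ_eq_ciSup, NNReal.coe_iSup]
  simp [supRowSum]

theorem supRowSum_nonneg {m n : ℕ} (W : Matrix (Fin m) (Fin n) ℝ) : 0 ≤ supRowSum W :=
  supRowSum_eq_linfty_opNorm W ▸ norm_nonneg W

theorem norm_mulVec_sub_mulVec_le {m n : ℕ} (W : Matrix (Fin m) (Fin n) ℝ) (v w : Fin n → ℝ) :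
    ‖W.mulVec v - W.mulVec w‖ ≤ supRowSum W * ‖v - w‖ := by
  rw [← Matrix.mulVec_sub, supRowSum_eq_linfty_opNorm]
  exact Matrix.linfty_opNorm_mulVec W (v - w)

end linftyOpNorm

section LSTM

variable {d h : ℕ}

noncomputable def lstmOutput (Wx : Matrix (Fin d) (Fin (1 + h)) ℝ) (u : Fin h → ℝ) : Fin d → ℝ :=
  fun i => Real.tanh (Wx.mulVec (oneVec u) i)

noncomputable def lstmCell (Wf Wi Wm : Matrix (Fin h) (Fin (1 + d + h)) ℝ) (s c : Fin h → ℝ)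
    (x : Fin d → ℝ) : Fin h → ℝ :=
  fun i => sigmoid (Wf.mulVec (oneVec2 x s) i) * c i
    + sigmoid (Wi.mulVec (oneVec2 x s) i) * Real.tanh (Wm.mulVec (oneVec2 x s) i)

noncomputable def lstmCellLipschitzConst (Wf Wi Wm : Matrix (Fin h) (Fin (1 + d + h)) ℝ)
    (c : Fin h → ℝ) : ℝ :=
  supRowSum Wf * ‖c‖ + supRowSum Wi + supRowSum Wm

theorem lstmCellLipschitzConst_nonneg (Wf Wi Wm : Matrix (Fin h) (Fin (1 + d + h)) ℝ)
    (c : Fin h → ℝ) : 0 ≤ lstmCellLipschitzConst Wf Wi Wm c := by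
  have := supRowSum_nonneg Wf; have := supRowSum_nonneg Wi; have := supRowSum_nonneg Wm
  unfold lstmCellLipschitzConst
  positivity

theorem norm_lstmOutput_sub_le (Wx : Matrix (Fin d) (Fin (1 + h)) ℝ) (u u' : Fin h → ℝ) :
    ‖lstmOutput Wx u - lstmOutput Wx u'‖ ≤ supRowSum Wx * ‖u - u'‖ := by
  refine (pi_norm_le_iff_of_nonneg (mul_nonneg (supRowSum_nonneg Wx) (norm_nonneg _))).2 fun i => ?_
  calc ‖lstmOutput Wx u i - lstmOutput Wx u' i‖
      ≤ ‖Wx.mulVec (oneVec u) - Wx.mulVec (oneVec u')‖ :=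
        (abs_sub_le_of_lipschitzWith_one Real.lipschitzWith_tanh _ _).trans
          (norm_le_pi_norm (Wx.mulVec (oneVec u) - Wx.mulVec (oneVec u')) i)
    _ ≤ supRowSum Wx * ‖oneVec u - oneVec u'‖ := norm_mulVec_sub_mulVec_le _ _ _
    _ ≤ supRowSum Wx * ‖u - u'‖ :=
        mul_le_mul_of_nonneg_left (norm_oneVec_sub_oneVec_le u u') (supRowSum_nonneg Wx)

theorem norm_lstmCell_sub_le (Wf Wi Wm : Matrix (Fin h) (Fin (1 + d + h)) ℝ) (s c : Fin h → ℝ)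
    (x x' : Fin d → ℝ) :
    ‖lstmCell Wf Wi Wm s c x - lstmCell Wf Wi Wm s c x'‖
      ≤ lstmCellLipschitzConst Wf Wi Wm c * ‖x - x'‖ := by
  have hpreact (W : Matrix (Fin h) (Fin (1 + d + h)) ℝ) (i : Fin h) :
      |W.mulVec (oneVec2 x s) i - W.mulVec (oneVec2 x' s) i| ≤ supRowSum W * ‖x - x'‖ :=
    calc _ ≤ ‖W.mulVec (oneVec2 x s) - W.mulVec (oneVec2 x' s)‖ := by
          simpa using norm_le_pi_norm (W.mulVec (oneVec2 x s) - W.mulVec (oneVec2 x' s)) i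
      _ ≤ supRowSum W * ‖oneVec2 x s - oneVec2 x' s‖ := norm_mulVec_sub_mulVec_le _ _ _
      _ ≤ supRowSum W * ‖x - x'‖ :=
          mul_le_mul_of_nonneg_left (norm_oneVec2_sub_oneVec2_le x x' s) (supRowSum_nonneg W)
  refine (pi_norm_le_iff_of_nonneg
    (mul_nonneg (lstmCellLipschitzConst_nonneg Wf Wi Wm c) (norm_nonneg _))).2 fun i => ?_
  have hc : |c i| ≤ ‖c‖ := by simpa using norm_le_pi_norm c i
  calc ‖lstmCell Wf Wi Wm s c x i - lstmCell Wf Wi Wm s c x' i‖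
      ≤ |Wf.mulVec (oneVec2 x s) i - Wf.mulVec (oneVec2 x' s) i| * |c i|
        + |Wi.mulVec (oneVec2 x s) i - Wi.mulVec (oneVec2 x' s) i|
        + |Wm.mulVec (oneVec2 x s) i - Wm.mulVec (oneVec2 x' s) i| :=
        abs_cellUpdate_sub_le _ _ _ _ _ _ _
    _ ≤ supRowSum Wf * ‖x - x'‖ * ‖c‖ + supRowSum Wi * ‖x - x'‖ + supRowSum Wm * ‖x - x'‖ :=
        add_le_add (add_le_add (mul_le_mul (hpreact Wf i) hc (abs_nonneg _)
          (mul_nonneg (supRowSum_nonneg Wf) (norm_nonneg _))) (hpreact Wi i)) (hpreact Wm i)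
    _ = _ := by unfold lstmCellLipschitzConst; ring

end LSTM

theorem div_mul_le_of_le_mul_of_mul_le {e A K P X S : ℝ} (he : 0 ≤ e) (hK : 0 ≤ K) (hP₀ : 0 ≤ P)
    (hS : 0 ≤ S) (hP : P ≤ K * X) (hX : e * X ≤ A * S) : e / (A * K) * P ≤ S := by
  rcases le_or_gt (A * K) 0 with hAK | hAK
  · exact (mul_nonpos_of_nonpos_of_nonneg (div_nonpos_of_nonneg_of_nonpos he hAK) hP₀).trans hS
  · rw [div_mul_eq_mul_div, div_le_iff₀ hAK]
    calc e * P ≤ e * (K * X) := by gcongr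
      _ = K * (e * X) := by ring
      _ ≤ K * (A * S) := by gcongr
      _ = S * (A * K) := by ring

theorem lstm_chaos_state_propagation_general
    (d h : ℕ)
    (Wx : Matrix (Fin d) (Fin (1 + h)) ℝ)
    (Wf Wi Wm : Matrix (Fin h) (Fin (1 + d + h)) ℝ)
    (s c : Fin h → ℝ)
    (g : (Fin h → ℝ) → Fin d → ℝ)
    (hg : g = fun u i => Real.tanh (Wx.mulVec (oneVec u) i))
    (Φ : (Fin d → ℝ) → Fin h → ℝ)
    (hΦ : Φ = fun x i =>
      sigmoid (Wf.mulVec (oneVec2 x s) i) * c i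
        + sigmoid (Wi.mulVec (oneVec2 x s) i) * Real.tanh (Wm.mulVec (oneVec2 x s) i))
    (K : ℝ)
    (hK : K = supRowSum Wf * ‖c‖ + supRowSum Wi + supRowSum Wm)
    (lam : ℝ) (st st' : Fin h → ℝ) (x x' : Fin d → ℝ)
    (hchaos : Real.exp lam * ‖x - x'‖ ≤ ‖g st - g st'‖) :
    Real.exp lam / (supRowSum Wx * K) * ‖Φ x - Φ x'‖ ≤ ‖st - st'‖ := by
  subst hg hΦ hK
  exact div_mul_le_of_le_mul_of_mul_le (Real.exp_nonneg lam)
    (lstmCellLipschitzConst_nonneg Wf Wi Wm c) (norm_nonneg _) (norm_nonneg _)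
    (norm_lstmCell_sub_le Wf Wi Wm s c x x') (hchaos.trans (norm_lstmOutput_sub_le Wx st st'))

theorem lstm_chaos_state_propagation
    (d h : ℕ) (hd : 0 < d) (hh : 0 < h)
    (Wx : Matrix (Fin d) (Fin (1 + h)) ℝ)
    (Wf Wi Wm : Matrix (Fin h) (Fin (1 + d + h)) ℝ)
    (s c : Fin h → ℝ)
    (g : (Fin h → ℝ) → Fin d → ℝ)
    (hg : g = fun u i => Real.tanh (Wx.mulVec (oneVec u) i))
    (Φ : (Fin d → ℝ) → Fin h → ℝ)
    (hΦ : Φ = fun x i =>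
      sigmoid (Wf.mulVec (oneVec2 x s) i) * c i
        + sigmoid (Wi.mulVec (oneVec2 x s) i) * Real.tanh (Wm.mulVec (oneVec2 x s) i))
    (K : ℝ)
    (hK : K = supRowSum Wf * ‖c‖ + supRowSum Wi + supRowSum Wm)
    (hKpos : 0 < K) (hWx : 0 < supRowSum Wx)
    (lam : ℝ) (st st' : Fin h → ℝ) (x x' : Fin d → ℝ)
    (hchaos : Real.exp lam * ‖x - x'‖ ≤ ‖g st - g st'‖) :
    Real.exp lam / (supRowSum Wx * K) * ‖Φ x - Φ x'‖ ≤ ‖st - st'‖ :=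
  lstm_chaos_state_propagation_general d h Wx Wf Wi Wm s c g hg Φ hΦ K hK lam st st' x x' hchaos
end

section
/- Let h ≥ 1, L ≥ 1, P ≥ 2 be integers and set N = min(L, ⌊L(P−1)/h⌋). For every real multivariate polynomial f in h variables of total degree at most N, there exist real (P−1)×h matrices W_1, …, W_L and real coefficients T_μ indexed by μ = (μ_1,…,μ_L) ∈ {1,…,P}^L such that for all v ∈ ℝ^h, f(v) = Σ_μ T_μ · Π_{l=1}^{L} u_l(μ_l, v), where u_l(1, v) = 1 and u_l(j, v) = (W_l v)_{j−1} for 2 ≤ j ≤ P. -/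
open scoped BigOperators

/-- The entry `u_l(j, v)` of the tensorized state propagation: `u_l(1,v) = 1`
(index `j = 0` here, 0-based) and `u_l(j, v) = (W_l v)_{j-1}` for the other indices. -/
noncomputable def uEnt {P h : ℕ} (W : Matrix (Fin (P - 1)) (Fin h) ℝ)
    (j : Fin P) (v : Fin h → ℝ) : ℝ :=
  if hj : (j : ℕ) = 0 then 1
  else W.mulVec v ⟨(j : ℕ) - 1, by have := j.isLt; omega⟩

/-!
The matrices can be chosen independently of the polynomial. Number the rows of all layers
consecutively, row `s = l (P - 1) + r` being row `r` of layer `l`, and let row `s` read the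
coordinate `s mod M`, where `M = max h (P - 1)`. A monomial `v_{c_0} ⋯ v_{c_{d-1}}` with
`c_0 ≤ ⋯ ≤ c_{d-1}` is then a single entry of the propagation tensor: the `k`-th factor is read by
row `M k + c_k`. Consecutive chosen rows are at least `M ≥ P - 1` apart, so they lie in distinct
layers, and they exist because `d M ≤ L (P - 1)` when `d ≤ min L ⌊L (P - 1) / h⌋`; every other
layer takes the index `1`, whose entry is the constant `1`. A polynomial of degree at most `N` is
a linear combination of such monomials.
-/

open Matrix

lemma Fintype.prod_extend_of_eq_one {ι κ α M : Type*} [Fintype ι] [Fintype κ] [CommMonoid M]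
    (S : κ ↪ ι) (g : ι → α → M) (φ : κ → α) (e : ι → α) (he : ∀ i, g i (e i) = 1) :
    ∏ i, g i (Function.extend S φ e i) = ∏ k, g (S k) (φ k) := by
  classical
  rw [← Finset.prod_subset (Finset.subset_univ (Finset.univ.map S)), Finset.prod_map]
  · exact Fintype.prod_congr _ _ fun k => by rw [S.injective.extend_apply]
  · intro i _ hi
    rw [Function.extend_apply' _ _ _ fun ⟨k, hk⟩ => hi (by simp [← hk]), he]

lemma Finsupp.prod_toMultiset_map {ι M : Type*} [CommMonoid M] (m : ι →₀ ℕ) (v : ι → M) :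
    (m.toMultiset.map v).prod = m.prod fun i n => v i ^ n := by
  rw [Finsupp.toMultiset_map, Finsupp.prod_toMultiset,
    Finsupp.prod_mapDomain_index (fun _ => pow_zero _) fun _ _ _ => pow_add _ _ _]

section uEnt

variable {P h : ℕ} (W : Matrix (Fin (P - 1)) (Fin h) ℝ) (v : Fin h → ℝ)

lemma uEnt_zero (hP : 0 < P) : uEnt W ⟨0, hP⟩ v = 1 := rfl

lemma uEnt_succ (r : Fin (P - 1)) : uEnt W ⟨r + 1, by omega⟩ v = (W *ᵥ v) r := rfl

end uEnt

lemma exists_prod_uEnt_eq_prod_mulVec {P h L d : ℕ} (hP : 0 < P)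
    (W : Fin L → Matrix (Fin (P - 1)) (Fin h) ℝ) (S : Fin d ↪ Fin L) (r : Fin d → Fin (P - 1)) :
    ∃ μ : Fin L → Fin P, ∀ v, ∏ l, uEnt (W l) (μ l) v = ∏ k, (W (S k) *ᵥ v) (r k) :=
  ⟨Function.extend S (fun k => ⟨r k + 1, by omega⟩) fun _ => ⟨0, hP⟩, fun v =>
    (Fintype.prod_extend_of_eq_one S (fun l j => uEnt (W l) j v) _ _
      fun l => uEnt_zero (W l) v hP).trans
    (Fintype.prod_congr _ _ fun k => uEnt_succ (W (S k)) v (r k))⟩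

noncomputable def slotMatrix (h P l : ℕ) : Matrix (Fin (P - 1)) (Fin h) ℝ :=
  Matrix.of fun r i => if (i : ℕ) = (l * (P - 1) + r) % max h (P - 1) then 1 else 0

lemma slotMatrix_mulVec {h P l : ℕ} {r : Fin (P - 1)} {i : Fin h}
    (hi : (i : ℕ) = (l * (P - 1) + r) % max h (P - 1)) (v : Fin h → ℝ) :
    (slotMatrix h P l *ᵥ v) r = v i := by
  simp [mulVec, dotProduct, slotMatrix, ← hi, Fin.val_inj]

lemma exists_embedding_layers_of_monotone {d L q M : ℕ} (c : Fin d → ℕ) (hc : Monotone c)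
    (hcM : ∀ k, c k < M) (hqM : q ≤ M) (hdM : d * M ≤ L * q) :
    ∃ (S : Fin d ↪ Fin L) (r : Fin d → Fin q), ∀ k, c k = (S k * q + r k) % M := by
  set t : Fin d → ℕ := fun k => M * k + c k
  have ht_lt (k : Fin d) : t k < L * q := by
    have : M * (k + 1) ≤ M * d := Nat.mul_le_mul_left _ k.isLt
    have := hcM k
    simp only [t]; nlinarith
  have hq (k : Fin d) : 0 < q := Nat.pos_of_ne_zero fun h => by simpa [h] using ht_lt k
  have hS_lt (k : Fin d) : t k / q < L := (Nat.div_lt_iff_lt_mul (hq k)).2 (ht_lt k)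
  have hS_mono : StrictMono fun k => t k / q := by
    intro k k' hkk'
    have hgap : t k + q ≤ t k' := by
      have : M * (k + 1) ≤ M * k' := Nat.mul_le_mul_left _ hkk'
      have := hc hkk'.le
      simp only [t]; nlinarith
    calc t k / q < (t k + q) / q := by rw [Nat.add_div_right _ (hq k)]; omega
      _ ≤ t k' / q := Nat.div_le_div_right hgap
  refine ⟨⟨fun k => ⟨t k / q, hS_lt k⟩, fun k k' hkk' => hS_mono.injective (Fin.val_eq_of_eq hkk')⟩,
    fun k => ⟨t k % q, Nat.mod_lt _ (hq k)⟩, fun k => ?_⟩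
  show c k = (t k / q * q + t k % q) % M
  rw [Nat.div_add_mod', Nat.mul_add_mod, Nat.mod_eq_of_lt (hcM k)]

lemma exists_prod_uEnt_slotMatrix_eq_monomial {h L P : ℕ} (hP : 0 < P) (m : Fin h →₀ ℕ)
    (hm : (m.sum fun _ e => e) ≤ min L (L * (P - 1) / h)) :
    ∃ μ : Fin L → Fin P, ∀ v,
      ∏ l : Fin L, uEnt (slotMatrix h P l) (μ l) v = m.prod fun i n => v i ^ n := by
  set cs := m.toMultiset.sort
  have hlen : cs.length = m.sum fun _ e => e := by
    rw [Multiset.length_sort, Finsupp.card_toMultiset]; rfl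
  have hdM : cs.length * max h (P - 1) ≤ L * (P - 1) := by
    rw [← Nat.mul_max_mul_left, hlen]
    exact max_le (Nat.mul_le_of_le_div _ _ _ (hm.trans (min_le_right _ _)))
      (Nat.mul_le_mul_right _ (hm.trans (min_le_left _ _)))
  obtain ⟨S, r, hSr⟩ := exists_embedding_layers_of_monotone (fun k => (cs.get k : ℕ))
    (Fin.val_strictMono.monotone.comp (Multiset.pairwise_sort _ _).sortedLE.monotone_get)
    (fun k => (cs.get k).isLt.trans_le (le_max_left _ _)) (le_max_right _ _) hdM
  obtain ⟨μ, hμ⟩ := exists_prod_uEnt_eq_prod_mulVec hP (fun l => slotMatrix h P l) S r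
  refine ⟨μ, fun v => ?_⟩
  calc ∏ l : Fin L, uEnt (slotMatrix h P l) (μ l) v = ∏ k, v (cs.get k) := by
        rw [hμ]; exact Fintype.prod_congr _ _ fun k => slotMatrix_mulVec (hSr k) v
    _ = (cs.map v).prod := Fin.prod_univ_fun_getElem cs v
    _ = m.prod fun i n => v i ^ n := by
        rw [← Multiset.prod_coe, ← Multiset.map_coe, Multiset.sort_eq,
          Finsupp.prod_toMultiset_map]

theorem tensorized_covers_polynomials_general
    (h L P : ℕ) (hP : 2 ≤ P)
    (f : MvPolynomial (Fin h) ℝ)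
    (hdeg : f.totalDegree ≤ min L (L * (P - 1) / h)) :
    ∃ (W : Fin L → Matrix (Fin (P - 1)) (Fin h) ℝ) (T : (Fin L → Fin P) → ℝ),
      ∀ v : Fin h → ℝ,
        MvPolynomial.eval v f = ∑ μ : Fin L → Fin P, T μ * ∏ l, uEnt (W l) (μ l) v := by
  refine ⟨fun l => slotMatrix h P l, ?_⟩
  have hf : (fun v => MvPolynomial.eval v f) =
      ∑ m ∈ f.support, MvPolynomial.coeff m f • fun v => m.prod fun i n => v i ^ n := by
    ext v
    simp [MvPolynomial.eval_eq, Finset.sum_apply, Finsupp.prod]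
  have hspan : (fun v => MvPolynomial.eval v f) ∈ Submodule.span ℝ
      (Set.range fun μ : Fin L → Fin P => fun v => ∏ l : Fin L, uEnt (slotMatrix h P l) (μ l) v) := by
    rw [hf]
    refine Submodule.sum_mem _ fun m hm => Submodule.smul_mem _ _ (Submodule.subset_span ?_)
    obtain ⟨μ, hμ⟩ := exists_prod_uEnt_slotMatrix_eq_monomial (by omega) m
      ((MvPolynomial.le_totalDegree hm).trans hdeg)
    exact ⟨μ, funext hμ⟩
  obtain ⟨T, hT⟩ := (Submodule.mem_span_range_iff_exists_fun ℝ).1 hspan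
  exact ⟨T, fun v => by simp [← congrFun hT v, Finset.sum_apply]⟩

theorem tensorized_covers_polynomials
    (h L P : ℕ) (hh : 1 ≤ h) (hL : 1 ≤ L) (hP : 2 ≤ P)
    (f : MvPolynomial (Fin h) ℝ)
    (hdeg : f.totalDegree ≤ min L (L * (P - 1) / h)) :
    ∃ (W : Fin L → Matrix (Fin (P - 1)) (Fin h) ℝ) (T : (Fin L → Fin P) → ℝ),
      ∀ v : Fin h → ℝ,
        MvPolynomial.eval v f = ∑ μ : Fin L → Fin P, T μ * ∏ l, uEnt (W l) (μ l) v :=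
  tensorized_covers_polynomials_general h L P hP f hdeg
end

section
/- Let h ≥ 1, L ≥ 1, P ≥ 2 be integers with P − 1 ≥ h. Then the set of functions ℝ^h → ℝ of the form v ↦ Σ_μ T_μ · Π_{l=1}^{L} u_l(μ_l, v), as the real (P−1)×h matrices W_1, …, W_L and the real coefficients T_μ (μ ∈ {1,…,P}^L) range over all possibilities, is exactly the set of evaluation functions of real multivariate polynomials in h variables of total degree at most L. Here u_l(1, v) = 1 and u_l(j, v) = (W_l v)_{j−1} for 2 ≤ j ≤ P. -/
open scoped BigOperators

/-- Polynomial representing `uEnt`. -/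
noncomputable def qPoly {P h : ℕ} (W : Matrix (Fin (P - 1)) (Fin h) ℝ) (j : Fin P) :
    MvPolynomial (Fin h) ℝ :=
  if hj : (j : ℕ) = 0 then 1
  else ∑ i : Fin h,
    MvPolynomial.C (W ⟨(j : ℕ) - 1, by have := j.isLt; omega⟩ i) * MvPolynomial.X i

lemma eval_qPoly {P h : ℕ} (W : Matrix (Fin (P - 1)) (Fin h) ℝ) (j : Fin P) (v : Fin h → ℝ) :
    MvPolynomial.eval v (qPoly W j) = uEnt W j v := by
  unfold qPoly uEnt
  split
  · simp
  · simp [Matrix.mulVec, dotProduct]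

lemma totalDegree_qPoly_le {P h : ℕ} (W : Matrix (Fin (P - 1)) (Fin h) ℝ) (j : Fin P) :
    (qPoly W j).totalDegree ≤ 1 := by
  unfold qPoly
  split
  · simp
  · refine le_trans (MvPolynomial.totalDegree_finset_sum _ _) (Finset.sup_le fun i _ => ?_)
    refine le_trans (MvPolynomial.totalDegree_mul _ _) ?_
    simp [MvPolynomial.totalDegree_C, MvPolynomial.totalDegree_X]

/-- The fixed "identity" weight matrix. -/
noncomputable def W0 (h P : ℕ) : Matrix (Fin (P - 1)) (Fin h) ℝ :=
  fun k i => if (k : ℕ) = (i : ℕ) then 1 else 0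

/-- The multi-index selecting the monomial `m`. -/
noncomputable def muOf {h P : ℕ} (hP : 2 ≤ P) (hPh : h ≤ P - 1) (L : ℕ)
    (m : Fin h →₀ ℕ) (l : Fin L) : Fin P :=
  if hl : (l : ℕ) < m.toMultiset.toList.length then
    ⟨(m.toMultiset.toList.get ⟨l, hl⟩ : ℕ) + 1,
      by have := (m.toMultiset.toList.get ⟨l, hl⟩).isLt; omega⟩
  else ⟨0, by omega⟩

lemma uEnt_W0_muOf {h L P : ℕ} (hP : 2 ≤ P) (hPh : h ≤ P - 1)
    (m : Fin h →₀ ℕ) (l : Fin L) (v : Fin h → ℝ) :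
    uEnt (W0 h P) (muOf hP hPh L m l) v =
      (m.toMultiset.toList.map v).getD (l : ℕ) 1 := by
  unfold muOf
  split
  · next hl =>
    rw [List.getD_eq_getElem _ _ (by simpa using hl)]
    simp only [uEnt, W0, Nat.add_sub_cancel]
    rw [dif_neg (Nat.succ_ne_zero _)]
    simp only [Matrix.mulVec, dotProduct]
    rw [Finset.sum_eq_single (m.toMultiset.toList.get ⟨l, hl⟩)]
    · simp [W0]
    · intro b _ hb
      simp only [W0]
      rw [if_neg (by simpa [Fin.val_inj] using (Ne.symm hb)), zero_mul]
    · simp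
  · next hl =>
    rw [List.getD_eq_default _ _ (by simpa using hl)]
    simp [uEnt]

lemma list_prod_getD (xs : List ℝ) :
    ∏ i ∈ Finset.range xs.length, xs.getD i 1 = xs.prod := by
  induction xs with
  | nil => simp
  | cons a xs ih =>
    rw [List.length_cons, Finset.prod_range_succ']
    simp only [List.getD_cons_succ, List.getD_cons_zero, ih, List.prod_cons, mul_comm]

lemma prod_uEnt_muOf {h L P : ℕ} (hP : 2 ≤ P) (hPh : h ≤ P - 1)
    (m : Fin h →₀ ℕ) (hm : m.toMultiset.toList.length ≤ L) (v : Fin h → ℝ) :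
    ∏ l : Fin L, uEnt (W0 h P) (muOf hP hPh L m l) v = m.prod fun i e => v i ^ e := by
  have h1 : ∏ l : Fin L, uEnt (W0 h P) (muOf hP hPh L m l) v
      = ∏ l : Fin L, (m.toMultiset.toList.map v).getD (l : ℕ) 1 :=
    Finset.prod_congr rfl fun l _ => uEnt_W0_muOf hP hPh m l v
  rw [h1, Fin.prod_univ_eq_prod_range (fun i => (m.toMultiset.toList.map v).getD i 1) L]
  have h2 : ∏ i ∈ Finset.range L, (m.toMultiset.toList.map v).getD i 1
      = ∏ i ∈ Finset.range (m.toMultiset.toList.map v).length,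
          (m.toMultiset.toList.map v).getD i 1 := by
    refine (Finset.prod_subset (Finset.range_subset_range.mpr (by simpa using hm)) ?_).symm
    intro i _ hi
    exact List.getD_eq_default _ _ (Nat.le_of_not_lt (by simpa using hi))
  rw [h2, list_prod_getD]
  have h3 : (m.toMultiset.toList.map v).prod = (m.toMultiset.map v).prod := by
    rw [← Multiset.prod_coe, ← Multiset.map_coe, Multiset.coe_toList]
  rw [h3, Finsupp.toMultiset_map, Finsupp.prod_toMultiset]
  exact Finsupp.prod_mapDomain_index (fun a => pow_zero _) (fun a b₁ b₂ => pow_add _ _ _)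

theorem tensorized_eq_polynomials
    (h L P : ℕ) (hh : 1 ≤ h) (hL : 1 ≤ L) (hP : 2 ≤ P) (hPh : h ≤ P - 1) :
    {F : (Fin h → ℝ) → ℝ |
        ∃ (W : Fin L → Matrix (Fin (P - 1)) (Fin h) ℝ) (T : (Fin L → Fin P) → ℝ),
          F = fun v => ∑ μ : Fin L → Fin P, T μ * ∏ l, uEnt (W l) (μ l) v}
      = {F : (Fin h → ℝ) → ℝ |
          ∃ f : MvPolynomial (Fin h) ℝ, f.totalDegree ≤ L ∧
            F = fun v => MvPolynomial.eval v f} := by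
  ext F
  simp only [Set.mem_setOf_eq]
  constructor
  · rintro ⟨W, T, rfl⟩
    refine ⟨∑ μ : Fin L → Fin P, MvPolynomial.C (T μ) * ∏ l, qPoly (W l) (μ l), ?_, ?_⟩
    · refine le_trans (MvPolynomial.totalDegree_finset_sum _ _) (Finset.sup_le fun μ _ => ?_)
      refine le_trans (MvPolynomial.totalDegree_mul _ _) ?_
      rw [MvPolynomial.totalDegree_C, zero_add]
      refine le_trans (MvPolynomial.totalDegree_finset_prod _ _) ?_
      calc ∑ l : Fin L, (qPoly (W l) (μ l)).totalDegree
          ≤ ∑ _l : Fin L, 1 := Finset.sum_le_sum fun l _ => totalDegree_qPoly_le _ _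
        _ = L := by simp
    · funext v
      simp [eval_qPoly]
  · rintro ⟨f, hf, rfl⟩
    refine ⟨fun _ => W0 h P,
      fun μ => ∑ m ∈ f.support, if μ = muOf hP hPh L m then f.coeff m else 0, ?_⟩
    funext v
    have key : ∀ m ∈ f.support,
        (∏ l : Fin L, uEnt (W0 h P) (muOf hP hPh L m l) v) = ∏ i, v i ^ m i := by
      intro m hm
      rw [prod_uEnt_muOf hP hPh m ?_ v, ← Finsupp.prod_pow]
      rw [Multiset.length_toList, Finsupp.card_toMultiset]
      exact le_trans (MvPolynomial.le_totalDegree hm) hf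
    calc MvPolynomial.eval v f
        = ∑ m ∈ f.support, f.coeff m * ∏ i, v i ^ m i := MvPolynomial.eval_eq' v f
      _ = ∑ m ∈ f.support, ∑ μ : Fin L → Fin P,
            (if μ = muOf hP hPh L m then f.coeff m else 0) * ∏ l, uEnt (W0 h P) (μ l) v := by
          refine Finset.sum_congr rfl fun m hm => ?_
          rw [← key m hm]
          rw [Finset.sum_congr rfl (fun μ _ => ite_mul (μ = muOf hP hPh L m) _ _ _)]
          simp only [zero_mul]
          rw [Finset.sum_ite_eq' Finset.univ (muOf hP hPh L m)
            (fun μ => f.coeff m * ∏ l, uEnt (W0 h P) (μ l) v), if_pos (Finset.mem_univ _)]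
      _ = ∑ μ : Fin L → Fin P, ∑ m ∈ f.support,
            (if μ = muOf hP hPh L m then f.coeff m else 0) * ∏ l, uEnt (W0 h P) (μ l) v :=
          Finset.sum_comm
      _ = ∑ μ : Fin L → Fin P,
            (∑ m ∈ f.support, if μ = muOf hP hPh L m then f.coeff m else 0) *
              ∏ l, uEnt (W0 h P) (μ l) v := by
          exact Finset.sum_congr rfl fun μ _ => (Finset.sum_mul _ _ _).symm
end

section
/- Let h ≥ 1 and P ≥ 2 be integers with P − 1 ≥ h, and let f : ℝ^h → ℝ be continuous. Then for every ε > 0 there exist an integer L ≥ 1, real (P−1)×h matrices W_1, …, W_L, and real coefficients T_μ (μ ∈ {1,…,P}^L) such that sup over v ∈ [−1,1]^h of |f(v) − Σ_μ T_μ · Π_{l=1}^{L} u_l(μ_l, v)| < ε, where u_l(1, v) = 1 and u_l(j, v) = (W_l v)_{j−1} for 2 ≤ j ≤ P. -/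
open scoped BigOperators

namespace TensorAux

variable {h P : ℕ}

/-- representable with prescribed length and weights -/
def RepW (L : ℕ) (W : Fin L → Matrix (Fin (P - 1)) (Fin h) ℝ)
    (g : (Fin h → ℝ) → ℝ) : Prop :=
  ∃ T : (Fin L → Fin P) → ℝ,
    ∀ v, g v = ∑ μ : Fin L → Fin P, T μ * ∏ l, uEnt (W l) (μ l) v

def Rep (h P : ℕ) (g : (Fin h → ℝ) → ℝ) : Prop :=
  ∃ L, 1 ≤ L ∧ ∃ W : Fin L → Matrix (Fin (P - 1)) (Fin h) ℝ, RepW L W g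

lemma repW_single {L : ℕ} (W : Fin L → Matrix (Fin (P - 1)) (Fin h) ℝ)
    (μ₀ : Fin L → Fin P) :
    RepW L W (fun v => ∏ l, uEnt (W l) (μ₀ l) v) := by
  refine ⟨fun μ => if μ = μ₀ then 1 else 0, fun v => ?_⟩
  rw [Finset.sum_eq_single μ₀]
  · simp
  · intro b _ hb; simp [hb]
  · simp

lemma repW_one (hP : 0 < P) {L : ℕ} (W : Fin L → Matrix (Fin (P - 1)) (Fin h) ℝ) :
    RepW L W (fun _ => (1 : ℝ)) := by
  obtain ⟨T, hT⟩ := repW_single W (fun _ => (⟨0, hP⟩ : Fin P))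
  refine ⟨T, fun v => ?_⟩
  rw [← hT v]
  simp [uEnt]

lemma repW_add {L : ℕ} {W : Fin L → Matrix (Fin (P - 1)) (Fin h) ℝ}
    {g₁ g₂ : (Fin h → ℝ) → ℝ} (h₁ : RepW L W g₁) (h₂ : RepW L W g₂) :
    RepW L W (fun v => g₁ v + g₂ v) := by
  obtain ⟨T₁, hT₁⟩ := h₁
  obtain ⟨T₂, hT₂⟩ := h₂
  refine ⟨T₁ + T₂, fun v => ?_⟩
  simp [hT₁ v, hT₂ v, add_mul, Finset.sum_add_distrib]

lemma repW_smul {L : ℕ} {W : Fin L → Matrix (Fin (P - 1)) (Fin h) ℝ}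
    {g : (Fin h → ℝ) → ℝ} (c : ℝ) (hg : RepW L W g) :
    RepW L W (fun v => c * g v) := by
  obtain ⟨T, hT⟩ := hg
  refine ⟨fun μ => c * T μ, fun v => ?_⟩
  simp [hT v, Finset.mul_sum, mul_assoc]

/-- key concatenation lemma: products multiply -/
lemma repW_mul_append {L₁ L₂ : ℕ}
    {W₁ : Fin L₁ → Matrix (Fin (P - 1)) (Fin h) ℝ}
    {W₂ : Fin L₂ → Matrix (Fin (P - 1)) (Fin h) ℝ}
    {g₁ g₂ : (Fin h → ℝ) → ℝ} (h₁ : RepW L₁ W₁ g₁) (h₂ : RepW L₂ W₂ g₂) :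
    RepW (L₁ + L₂) (Fin.append W₁ W₂) (fun v => g₁ v * g₂ v) := by
  obtain ⟨T₁, hT₁⟩ := h₁
  obtain ⟨T₂, hT₂⟩ := h₂
  refine ⟨fun μ => T₁ (fun i => μ (Fin.castAdd L₂ i)) * T₂ (fun i => μ (Fin.natAdd L₁ i)),
    fun v => ?_⟩
  dsimp only
  rw [hT₁ v, hT₂ v, Finset.sum_mul_sum]
  rw [← Equiv.sum_comp (Fin.appendEquiv L₁ L₂), Fintype.sum_prod_type]
  refine Finset.sum_congr rfl fun μ₁ _ => Finset.sum_congr rfl fun μ₂ _ => ?_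
  have hprod : ∏ l : Fin (L₁ + L₂),
      uEnt (Fin.append W₁ W₂ l) (Fin.appendEquiv L₁ L₂ (μ₁, μ₂) l) v
      = (∏ l, uEnt (W₁ l) (μ₁ l) v) * ∏ l, uEnt (W₂ l) (μ₂ l) v := by
    rw [Fin.prod_univ_add]
    simp [Fin.appendEquiv, Fin.append_left, Fin.append_right]
  rw [hprod]
  simp only [Fin.appendEquiv_apply, Fin.append_left, Fin.append_right]
  ring

lemma rep_mul {g₁ g₂ : (Fin h → ℝ) → ℝ} (h₁ : Rep h P g₁) (h₂ : Rep h P g₂) :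
    Rep h P (fun v => g₁ v * g₂ v) := by
  obtain ⟨L₁, hL₁, W₁, hW₁⟩ := h₁
  obtain ⟨L₂, hL₂, W₂, hW₂⟩ := h₂
  exact ⟨L₁ + L₂, by omega, _, repW_mul_append hW₁ hW₂⟩

lemma rep_add (hP : 0 < P) {g₁ g₂ : (Fin h → ℝ) → ℝ}
    (h₁ : Rep h P g₁) (h₂ : Rep h P g₂) : Rep h P (fun v => g₁ v + g₂ v) := by
  obtain ⟨L₁, hL₁, W₁, hW₁⟩ := h₁
  obtain ⟨L₂, hL₂, W₂, hW₂⟩ := h₂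
  refine ⟨L₁ + L₂, by omega, Fin.append W₁ W₂, ?_⟩
  have a1 : RepW (L₁ + L₂) (Fin.append W₁ W₂) g₁ := by
    have := repW_mul_append hW₁ (repW_one (h := h) hP W₂)
    simpa using this
  have a2 : RepW (L₁ + L₂) (Fin.append W₁ W₂) g₂ := by
    have := repW_mul_append (repW_one (h := h) hP W₁) hW₂
    simpa using this
  exact repW_add a1 a2

lemma rep_const (hP : 0 < P) (hh : 0 < h) (c : ℝ) : Rep h P (fun _ => c) := by
  refine ⟨1, le_refl 1, fun _ => 0, ?_⟩
  have := repW_smul (h := h) (P := P) c (repW_one hP (fun _ : Fin 1 => 0))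
  simpa using this

lemma rep_coord (hP : 2 ≤ P) (i : Fin h) : Rep h P (fun v => v i) := by
  have hP1 : 0 < P - 1 := by omega
  set W₀ : Matrix (Fin (P - 1)) (Fin h) ℝ :=
    Matrix.of (fun r c => if (r : ℕ) = 0 ∧ c = i then 1 else 0) with hW₀
  refine ⟨1, le_refl 1, fun _ => W₀, ?_⟩
  set μ₀ : Fin 1 → Fin P := fun _ => (⟨1, by omega⟩ : Fin P) with hμ₀
  obtain ⟨T, hT⟩ := repW_single (P := P) (fun _ : Fin 1 => W₀) μ₀
  refine ⟨T, fun v => ?_⟩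
  rw [← hT v]
  have : uEnt W₀ (μ₀ 0) v = v i := by
    rw [uEnt]
    rw [dif_neg (by simp [hμ₀])]
    show W₀.mulVec v ⟨1 - 1, _⟩ = v i
    rw [Matrix.mulVec]
    show (∑ c, W₀ ⟨0, hP1⟩ c * v c) = v i
    rw [Finset.sum_eq_single i]
    · simp [hW₀]
    · intro b _ hb; simp [hW₀, hb]
    · simp
  simp [this]

lemma rep_polynomial (hP : 2 ≤ P) (hh : 0 < h) (p : MvPolynomial (Fin h) ℝ) :
    Rep h P (fun v => MvPolynomial.eval v p) := by
  induction p using MvPolynomial.induction_on with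
  | C a => simpa using rep_const (by omega) hh a
  | add p q hp hq =>
      have := rep_add (h := h) (by omega : 0 < P) hp hq
      simpa using this
  | mul_X p i hp =>
      have := rep_mul (h := h) hp (rep_coord hP i)
      simpa using this

end TensorAux

theorem tensorized_universal_approximation
    (h P : ℕ) (hh : 1 ≤ h) (hP : 2 ≤ P) (hPh : h ≤ P - 1)
    (f : (Fin h → ℝ) → ℝ) (hf : Continuous f)
    (ε : ℝ) (hε : 0 < ε) :
    ∃ L : ℕ, 1 ≤ L ∧
      ∃ (W : Fin L → Matrix (Fin (P - 1)) (Fin h) ℝ) (T : (Fin L → Fin P) → ℝ),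
        ∀ v : Fin h → ℝ, (∀ i, v i ∈ Set.Icc (-1 : ℝ) 1) →
          |f v - ∑ μ : Fin L → Fin P, T μ * ∏ l, uEnt (W l) (μ l) v| < ε := by
  classical
  -- the cube as a compact subtype
  set K : Set (Fin h → ℝ) := Set.univ.pi (fun _ => Set.Icc (-1 : ℝ) 1) with hK
  have hKc : IsCompact K := isCompact_univ_pi (fun _ => isCompact_Icc)
  haveI : CompactSpace K := isCompact_iff_compactSpace.mp hKc
  -- the subalgebra of restrictions of representable functions
  let A : Subalgebra ℝ C(K, ℝ) :=
    { carrier := {g | ∃ g' : (Fin h → ℝ) → ℝ,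
        TensorAux.Rep h P g' ∧ ∀ x : K, g x = g' x.1}
      mul_mem' := by
        rintro a b ⟨a', ha', haa⟩ ⟨b', hb', hbb⟩
        exact ⟨fun v => a' v * b' v, TensorAux.rep_mul ha' hb',
          fun x => by simp [haa x, hbb x]⟩
      add_mem' := by
        rintro a b ⟨a', ha', haa⟩ ⟨b', hb', hbb⟩
        exact ⟨fun v => a' v + b' v, TensorAux.rep_add (by omega) ha' hb',
          fun x => by simp [haa x, hbb x]⟩
      algebraMap_mem' := fun c =>
        ⟨fun _ => c, TensorAux.rep_const (by omega) (by omega) c, fun x => rfl⟩ }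
  have hsep : A.SeparatesPoints := by
    intro x y hxy
    have : x.1 ≠ y.1 := fun hc => hxy (Subtype.ext hc)
    obtain ⟨i, hi⟩ := Function.ne_iff.mp this
    refine ⟨_, ⟨⟨fun x : K => x.1 i, (continuous_apply i).comp continuous_subtype_val⟩,
      ⟨fun v => v i, TensorAux.rep_coord hP i, fun x => rfl⟩, rfl⟩, hi⟩
  obtain ⟨⟨g, hgA⟩, hgnear⟩ :=
    ContinuousMap.exists_mem_subalgebra_near_continuous_of_separatesPoints A hsep
      (fun x : K => f x.1) (hf.comp continuous_subtype_val) ε hε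
  obtain ⟨g', ⟨L, hL, W, T, hT⟩, hgg'⟩ := hgA
  refine ⟨L, hL, W, T, fun v hv => ?_⟩
  have hvK : v ∈ K := by
    rw [hK, Set.mem_univ_pi]; exact fun i => hv i
  have := hgnear ⟨v, hvK⟩
  rw [Real.norm_eq_abs] at this
  have hgv : g ⟨v, hvK⟩ = ∑ μ : Fin L → Fin P, T μ * ∏ l, uEnt (W l) (μ l) v := by
    rw [hgg' ⟨v, hvK⟩, hT v]
  rw [hgv] at this
  rw [abs_sub_comm] at this
  exact this
end

section
/- Let p > 1, let L ≥ 2 and P ≥ 2 be integers, and let W : {1,…,P}^L → ℝ be a tensor whose matricization W(l) is nonzero for every cut 1 ≤ l ≤ L−1. Let 𝒯 be a nonempty set of tensors W̄ : {1,…,P}^L → ℝ all of whose matricizations W̄(l) are nonzero. Then inf over W̄ ∈ 𝒯 of (max over 1 ≤ l ≤ L−1 of ‖W(l) − W̄(l)‖_p) ≥ inf over W̄ ∈ 𝒯 of (max over 1 ≤ l ≤ L−1 of | e^{((1−p)/p)·S_p(W(l))}·‖W(l)‖_1 − e^{((1−p)/p)·S_p(W̄(l))}·‖W̄(l)‖_1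 |). -/
/-!
The entropy term is the Schatten norm in disguise: `e^{((1-p)/p) S_p(A)} ‖A‖₁ = ‖A‖_p`, so the
bound holds cut by cut by the reverse triangle inequality for `‖·‖_p`. For the triangle
inequality, the key estimate is `∑ᵢ |⟪uᵢ, A vᵢ⟫|^p ≤ ∑ₖ σₖ(A)^p` for pairwise orthogonal
families of vectors of norm at most one: expanding `A = ∑ₖ σₖ wₖ xₖᵀ` writes `⟪uᵢ, A vᵢ⟫` as
`∑ₖ aᵢₖ σₖ cᵢₖ` where, by Bessel, the rows and columns of `a` and `c` have `ℓ²` norm at most one,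
so `|⟪uᵢ, A vᵢ⟫|` is dominated by a doubly substochastic average of the `σₖ`, and convexity of
`t ↦ t^p` finishes.
-/

open scoped BigOperators

/-- The singular values of a real matrix `A`: the nonnegative square roots of the
eigenvalues of the positive semidefinite matrix `Aᵀ * A`. -/
noncomputable def singularValues {m n : Type*} [Fintype m] [Fintype n] [DecidableEq n]
    (A : Matrix m n ℝ) : n → ℝ := fun i =>
  Real.sqrt ((show (A.transpose * A).IsHermitian by
    rw [← Matrix.conjTranspose_eq_transpose_of_trivial]
    exact Matrix.isHermitian_conjTranspose_mul_self A).eigenvalues i)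

/-- The Schatten `p`-norm `‖A‖_p = (Σ_i σ_i(A)^p)^{1/p}`. -/
noncomputable def schattenNorm (p : ℝ) {m n : Type*} [Fintype m] [Fintype n] [DecidableEq n]
    (A : Matrix m n ℝ) : ℝ :=
  (∑ i, singularValues A i ^ p) ^ (1 / p)

/-- The trace norm `‖A‖_1 = Σ_i σ_i(A)`. -/
noncomputable def traceNorm {m n : Type*} [Fintype m] [Fintype n] [DecidableEq n]
    (A : Matrix m n ℝ) : ℝ :=
  ∑ i, singularValues A i

/-- The `p`-Rényi entanglement entropy
`S_p(A) = (1/(1-p)) log((Σ_i σ_i(A)^p)/(Σ_i σ_i(A))^p)`. -/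
noncomputable def renyiEE (p : ℝ) {m n : Type*} [Fintype m] [Fintype n] [DecidableEq n]
    (A : Matrix m n ℝ) : ℝ :=
  (1 / (1 - p)) * Real.log ((∑ i, singularValues A i ^ p) / (∑ i, singularValues A i) ^ p)

/-- The matricization `W(l)` of a tensor `W : {1,…,P}^L → ℝ` at cut `l`: the matrix
with rows indexed by multi-indices of length `l` and columns by those of length
`L - l`, whose `(a, b)` entry is `W` evaluated at the concatenation of `a` and `b`. -/
def matricize {L P : ℕ} (W : (Fin L → Fin P) → ℝ) (l : ℕ) (hl : l ≤ L) :
    Matrix (Fin l → Fin P) (Fin (L - l) → Fin P) ℝ :=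
  fun a b => W fun i => Sum.elim a b (finSumFinEquiv.symm (Fin.cast (by omega) i))

/-- The matricization at the cut `l + 1` for `l : Fin (L - 1)`, i.e. at an
arbitrary cut `1 ≤ l + 1 ≤ L - 1`. -/
def cutMat {L P : ℕ} (hL : 2 ≤ L) (W : (Fin L → Fin P) → ℝ) (l : Fin (L - 1)) :
    Matrix (Fin ((l : ℕ) + 1) → Fin P) (Fin (L - ((l : ℕ) + 1)) → Fin P) ℝ :=
  matricize W ((l : ℕ) + 1) (by have := l.isLt; omega)

open scoped RealInnerProductSpace
open Matrix

theorem Matrix.isHermitian_transpose_mul_self {m n : Type*} [Fintype m] (A : Matrix m n ℝ) :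
    (Aᵀ * A).IsHermitian := by
  simpa only [conjTranspose_eq_transpose_of_trivial] using isHermitian_conjTranspose_mul_self A

theorem Matrix.posSemidef_transpose_mul_self {m n : Type*} [Fintype m] [Fintype n]
    (A : Matrix m n ℝ) : (Aᵀ * A).PosSemidef := by
  simpa only [conjTranspose_eq_transpose_of_trivial] using posSemidef_conjTranspose_mul_self A

section SingularValues

variable {m n : Type*} [Fintype m] [Fintype n] [DecidableEq n] (A : Matrix m n ℝ)

theorem singularValues_nonneg (k : n) : 0 ≤ singularValues A k :=
  Real.sqrt_nonneg _

theorem sq_singularValues (k : n) :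
    singularValues A k ^ 2 = (isHermitian_transpose_mul_self A).eigenvalues k :=
  Real.sq_sqrt ((posSemidef_transpose_mul_self A).eigenvalues_nonneg k)

theorem singularValues_neg : singularValues (-A) = singularValues A := by
  have h : (-A)ᵀ * -A = Aᵀ * A := by simp
  unfold singularValues
  congr! 4

end SingularValues

section SubOrthonormal

variable {ι E : Type*} [NormedAddCommGroup E] [InnerProductSpace ℝ E]

def SubOrthonormal (v : ι → E) : Prop :=
  Pairwise (fun i j => ⟪v i, v j⟫ = 0) ∧ ∀ i, ‖v i‖ ≤ 1

theorem Orthonormal.subOrthonormal {v : ι → E} (hv : Orthonormal ℝ v) : SubOrthonormal v :=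
  ⟨fun _ _ h => hv.inner_eq_zero h, fun i => (hv.1 i).le⟩

theorem SubOrthonormal.orthonormal_normalize {v : ι → E} (hv : SubOrthonormal v) :
    Orthonormal ℝ (fun i : {i // v i ≠ 0} => ‖v i‖⁻¹ • v i) := by
  refine ⟨fun i => ?_, fun i j hij => ?_⟩
  · rw [norm_smul, norm_inv, norm_norm, inv_mul_cancel₀ (norm_ne_zero_iff.mpr i.2)]
  · dsimp only
    rw [real_inner_smul_left, real_inner_smul_right, hv.1 (Subtype.coe_injective.ne hij),
      mul_zero, mul_zero]

theorem SubOrthonormal.sum_inner_sq_le [Fintype ι] {v : ι → E} (hv : SubOrthonormal v) (x : E) :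
    ∑ i, ⟪v i, x⟫ ^ 2 ≤ ‖x‖ ^ 2 := by
  classical
  have hsub : ∑ i, ⟪v i, x⟫ ^ 2 = ∑ i : {i // v i ≠ 0}, ⟪v i, x⟫ ^ 2 := by
    rw [← Finset.sum_subtype {i | v i ≠ 0} (by simp) (fun i => ⟪v i, x⟫ ^ 2),
      Finset.sum_filter_of_ne]
    intro i _ hi hvi
    simp [hvi] at hi
  calc ∑ i, ⟪v i, x⟫ ^ 2 = ∑ i : {i // v i ≠ 0}, ⟪v i, x⟫ ^ 2 := hsub
    _ ≤ ∑ i : {i // v i ≠ 0}, ‖⟪‖v i‖⁻¹ • v i, x⟫‖ ^ 2 := by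
      refine Finset.sum_le_sum fun i _ => ?_
      rw [real_inner_smul_left, Real.norm_eq_abs, sq_abs, mul_pow]
      refine le_mul_of_one_le_left (sq_nonneg _) (one_le_pow₀ ?_)
      exact (one_le_inv₀ (norm_pos_iff.mpr i.2)).mpr (hv.2 i)
    _ ≤ ‖x‖ ^ 2 := hv.orthonormal_normalize.sum_inner_products_le x

theorem SubOrthonormal.sum_inner_sq_le_one [Fintype ι] {v : ι → E} (hv : SubOrthonormal v)
    {x : E} (hx : ‖x‖ ≤ 1) : ∑ i, ⟪v i, x⟫ ^ 2 ≤ 1 :=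
  (hv.sum_inner_sq_le x).trans (pow_le_one₀ (norm_nonneg x) hx)

end SubOrthonormal

section SingularVectors

variable {m n : Type*} [Fintype m] [Fintype n] [DecidableEq n] (A : Matrix m n ℝ)

noncomputable abbrev rightSingularVectors : OrthonormalBasis n ℝ (EuclideanSpace ℝ n) :=
  (isHermitian_transpose_mul_self A).eigenvectorBasis

theorem inner_toEuclideanLin_toEuclideanLin (x y : EuclideanSpace ℝ n) :
    ⟪A.toEuclideanLin x, A.toEuclideanLin y⟫ = ⟪x, (Aᵀ * A).toEuclideanLin y⟫ := by
  simp only [toLpLin_apply, EuclideanSpace.inner_eq_star_dotProduct, ← mulVec_mulVec, star_trivial,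
    dotProduct_mulVec, mulVec_transpose]

theorem inner_toEuclideanLin_rightSingularVectors (k l : n) :
    ⟪A.toEuclideanLin (rightSingularVectors A k), A.toEuclideanLin (rightSingularVectors A l)⟫
      = if k = l then singularValues A k ^ 2 else 0 := by
  rw [inner_toEuclideanLin_toEuclideanLin, toLpLin_apply,
    (isHermitian_transpose_mul_self A).mulVec_eigenvectorBasis, WithLp.toLp_smul, WithLp.toLp_ofLp,
    inner_smul_right, orthonormal_iff_ite.mp (rightSingularVectors A).orthonormal]
  split_ifs with h
  · subst h; rw [sq_singularValues, mul_one]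
  · rw [mul_zero]

theorem norm_toEuclideanLin_rightSingularVectors (k : n) :
    ‖A.toEuclideanLin (rightSingularVectors A k)‖ = singularValues A k := by
  rw [← sq_eq_sq₀ (norm_nonneg _) (singularValues_nonneg A k), ← real_inner_self_eq_norm_sq,
    inner_toEuclideanLin_rightSingularVectors, if_pos rfl]

/-- Zero at indices with `σₖ = 0`, so the family is only sub-orthonormal. -/
noncomputable def leftSingularVectors (k : n) : EuclideanSpace ℝ m :=
  (singularValues A k)⁻¹ • A.toEuclideanLin (rightSingularVectors A k)

theorem toEuclideanLin_rightSingularVectors (k : n) :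
    A.toEuclideanLin (rightSingularVectors A k) = singularValues A k • leftSingularVectors A k := by
  rcases eq_or_ne (singularValues A k) 0 with h | h
  · rw [h, zero_smul, ← norm_eq_zero, norm_toEuclideanLin_rightSingularVectors, h]
  · rw [leftSingularVectors, smul_smul, mul_inv_cancel₀ h, one_smul]

theorem subOrthonormal_leftSingularVectors : SubOrthonormal (leftSingularVectors A) := by
  refine ⟨fun k l hkl => ?_, fun k => ?_⟩
  · simp only [leftSingularVectors, real_inner_smul_left, real_inner_smul_right,
      inner_toEuclideanLin_rightSingularVectors, if_neg hkl, mul_zero]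
  · rw [leftSingularVectors, norm_smul, norm_inv, norm_toEuclideanLin_rightSingularVectors,
      Real.norm_of_nonneg (singularValues_nonneg A k)]
    exact inv_mul_le_one_of_le₀ le_rfl (singularValues_nonneg A k)

theorem inner_leftSingularVectors_toEuclideanLin_rightSingularVectors (k : n) :
    ⟪leftSingularVectors A k, A.toEuclideanLin (rightSingularVectors A k)⟫
      = singularValues A k := by
  rw [leftSingularVectors, real_inner_smul_left, real_inner_self_eq_norm_sq,
    norm_toEuclideanLin_rightSingularVectors]
  rcases eq_or_ne (singularValues A k) 0 with h | h
  · rw [h, zero_pow two_ne_zero, mul_zero]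
  · field_simp

theorem inner_toEuclideanLin_eq_sum (u : EuclideanSpace ℝ m) (v : EuclideanSpace ℝ n) :
    ⟪u, A.toEuclideanLin v⟫ = ∑ k, ⟪u, leftSingularVectors A k⟫ * singularValues A k
        * ⟪rightSingularVectors A k, v⟫ := by
  conv_lhs => rw [← (rightSingularVectors A).sum_repr' v]
  simp only [map_sum, map_smul, toEuclideanLin_rightSingularVectors, inner_sum, smul_smul,
    real_inner_smul_right]
  exact Finset.sum_congr rfl fun k _ => by ring

end SingularVectors

section Majorization

variable {ι κ : Type*} [Fintype ι] [Fintype κ] {p : ℝ}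

theorem rpow_sum_mul_le_sum_mul_rpow (hp : 1 ≤ p) (d z : κ → ℝ) (hd : ∀ k, 0 ≤ d k)
    (hd1 : ∑ k, d k ≤ 1) (hz : ∀ k, 0 ≤ z k) : (∑ k, d k * z k) ^ p ≤ ∑ k, d k * z k ^ p := by
  have hp0 : 0 < p := zero_lt_one.trans_le hp
  have hsum : 0 ≤ ∑ k, d k * z k ^ p :=
    Finset.sum_nonneg fun k _ => mul_nonneg (hd k) (Real.rpow_nonneg (hz k) p)
  rw [← Real.le_rpow_inv_iff_of_pos (Finset.sum_nonneg fun k _ => mul_nonneg (hd k) (hz k)) hsum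
    hp0]
  calc ∑ k, d k * z k
      ≤ (∑ k, d k) ^ (1 - p⁻¹) * (∑ k, d k * z k ^ p) ^ p⁻¹ :=
        Real.inner_le_weight_mul_Lp_of_nonneg _ hp d z hd hz
    _ ≤ 1 * (∑ k, d k * z k ^ p) ^ p⁻¹ := by
        gcongr
        refine Real.rpow_le_one (Finset.sum_nonneg fun k _ => hd k) hd1 ?_
        rw [sub_nonneg]
        exact inv_le_one_of_one_le₀ hp
    _ = (∑ k, d k * z k ^ p) ^ p⁻¹ := one_mul _

theorem sum_rpow_sum_mul_le (hp : 1 ≤ p) (d : ι → κ → ℝ) (σ : κ → ℝ) (hd : ∀ i k, 0 ≤ d i k)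
    (hrow : ∀ i, ∑ k, d i k ≤ 1) (hcol : ∀ k, ∑ i, d i k ≤ 1) (hσ : ∀ k, 0 ≤ σ k) :
    ∑ i, (∑ k, d i k * σ k) ^ p ≤ ∑ k, σ k ^ p := by
  calc ∑ i, (∑ k, d i k * σ k) ^ p
      ≤ ∑ i, ∑ k, d i k * σ k ^ p :=
        Finset.sum_le_sum fun i _ => rpow_sum_mul_le_sum_mul_rpow hp _ σ (hd i) (hrow i) hσ
    _ = ∑ k, (∑ i, d i k) * σ k ^ p := by
        rw [Finset.sum_comm]
        simp only [Finset.sum_mul]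
    _ ≤ ∑ k, σ k ^ p :=
        Finset.sum_le_sum fun k _ =>
          mul_le_of_le_one_left (Real.rpow_nonneg (hσ k) p) (hcol k)

theorem sum_abs_sum_mul_mul_rpow_le (hp : 1 ≤ p) (a c : ι → κ → ℝ) (σ : κ → ℝ)
    (hσ : ∀ k, 0 ≤ σ k) (ha_row : ∀ i, ∑ k, a i k ^ 2 ≤ 1) (ha_col : ∀ k, ∑ i, a i k ^ 2 ≤ 1)
    (hc_row : ∀ i, ∑ k, c i k ^ 2 ≤ 1) (hc_col : ∀ k, ∑ i, c i k ^ 2 ≤ 1) :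
    ∑ i, |∑ k, a i k * σ k * c i k| ^ p ≤ ∑ k, σ k ^ p := by
  set d : ι → κ → ℝ := fun i k => (a i k ^ 2 + c i k ^ 2) / 2
  have hd_le : ∀ i, |∑ k, a i k * σ k * c i k| ≤ ∑ k, d i k * σ k := fun i => by
    refine (Finset.abs_sum_le_sum_abs _ _).trans (Finset.sum_le_sum fun k _ => ?_)
    rw [abs_mul, abs_mul, abs_of_nonneg (hσ k)]
    simp only [d, ← sq_abs (a i k), ← sq_abs (c i k)]
    nlinarith [mul_nonneg (hσ k) (sq_nonneg (|a i k| - |c i k|))]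
  have hrow : ∀ i, ∑ k, d i k ≤ 1 := fun i => by
    simp only [d, ← Finset.sum_div, Finset.sum_add_distrib]
    linarith [ha_row i, hc_row i]
  have hcol : ∀ k, ∑ i, d i k ≤ 1 := fun k => by
    simp only [d, ← Finset.sum_div, Finset.sum_add_distrib]
    linarith [ha_col k, hc_col k]
  calc ∑ i, |∑ k, a i k * σ k * c i k| ^ p
      ≤ ∑ i, (∑ k, d i k * σ k) ^ p :=
        Finset.sum_le_sum fun i _ => Real.rpow_le_rpow (abs_nonneg _) (hd_le i) (by linarith)
    _ ≤ ∑ k, σ k ^ p :=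
        sum_rpow_sum_mul_le hp d σ (fun i k => by positivity) hrow hcol hσ

end Majorization

section SchattenNorm

variable {m n : Type*} [Fintype m] [Fintype n] [DecidableEq n] {p : ℝ}

theorem sum_abs_inner_toEuclideanLin_rpow_le {ι : Type*} [Fintype ι] (hp : 1 ≤ p)
    (A : Matrix m n ℝ) {u : ι → EuclideanSpace ℝ m} {v : ι → EuclideanSpace ℝ n}
    (hu : SubOrthonormal u) (hv : SubOrthonormal v) :
    ∑ i, |⟪u i, A.toEuclideanLin (v i)⟫| ^ p ≤ ∑ k, singularValues A k ^ p := by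
  have hw := subOrthonormal_leftSingularVectors A
  have hx := (rightSingularVectors A).orthonormal
  simp only [inner_toEuclideanLin_eq_sum]
  refine sum_abs_sum_mul_mul_rpow_le hp _ _ _ (singularValues_nonneg A) (fun i => ?_)
    (fun k => hu.sum_inner_sq_le_one (hw.2 k)) (fun i => ?_) (fun k => ?_)
  · simp only [real_inner_comm _ (u i)]
    exact hw.sum_inner_sq_le_one (hu.2 i)
  · exact hx.subOrthonormal.sum_inner_sq_le_one (hv.2 i)
  · simp only [real_inner_comm _ (rightSingularVectors A k)]
    exact hv.sum_inner_sq_le_one (hx.1 k).le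

theorem rpow_sum_abs_inner_toEuclideanLin_le_schattenNorm {ι : Type*} [Fintype ι] (hp : 1 ≤ p)
    (A : Matrix m n ℝ) {u : ι → EuclideanSpace ℝ m} {v : ι → EuclideanSpace ℝ n}
    (hu : SubOrthonormal u) (hv : SubOrthonormal v) :
    (∑ i, |⟪u i, A.toEuclideanLin (v i)⟫| ^ p) ^ (1 / p) ≤ schattenNorm p A :=
  Real.rpow_le_rpow (Finset.sum_nonneg fun _ _ => Real.rpow_nonneg (abs_nonneg _) p)
    (sum_abs_inner_toEuclideanLin_rpow_le hp A hu hv) (by positivity)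

/-- Test `X + Y` against its own singular vectors, then apply Minkowski's inequality in `ℓᵖ`. -/
theorem schattenNorm_add_le (hp : 1 ≤ p) (X Y : Matrix m n ℝ) :
    schattenNorm p (X + Y) ≤ schattenNorm p X + schattenNorm p Y := by
  set w := leftSingularVectors (X + Y)
  set x := rightSingularVectors (X + Y)
  have hw := subOrthonormal_leftSingularVectors (X + Y)
  have hx := x.orthonormal.subOrthonormal
  have hσ : ∀ k, singularValues (X + Y) k
      = |⟪w k, X.toEuclideanLin (x k)⟫ + ⟪w k, Y.toEuclideanLin (x k)⟫| := fun k => by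
    rw [← inner_add_right, ← LinearMap.add_apply, ← map_add,
      inner_leftSingularVectors_toEuclideanLin_rightSingularVectors,
      abs_of_nonneg (singularValues_nonneg _ k)]
  calc schattenNorm p (X + Y)
      = (∑ k, |⟪w k, X.toEuclideanLin (x k)⟫ + ⟪w k, Y.toEuclideanLin (x k)⟫| ^ p) ^ (1 / p) := by
        simp only [schattenNorm, hσ]
    _ ≤ (∑ k, |⟪w k, X.toEuclideanLin (x k)⟫| ^ p) ^ (1 / p)
        + (∑ k, |⟪w k, Y.toEuclideanLin (x k)⟫| ^ p) ^ (1 / p) :=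
        Real.Lp_add_le _ _ _ hp
    _ ≤ schattenNorm p X + schattenNorm p Y :=
        add_le_add (rpow_sum_abs_inner_toEuclideanLin_le_schattenNorm hp X hw hx)
          (rpow_sum_abs_inner_toEuclideanLin_le_schattenNorm hp Y hw hx)

theorem schattenNorm_neg (A : Matrix m n ℝ) : schattenNorm p (-A) = schattenNorm p A := by
  rw [schattenNorm, schattenNorm, singularValues_neg]

theorem abs_schattenNorm_sub_schattenNorm_le (hp : 1 ≤ p) (X Y : Matrix m n ℝ) :
    |schattenNorm p X - schattenNorm p Y| ≤ schattenNorm p (X - Y) := by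
  have hX := schattenNorm_add_le hp (X - Y) Y
  have hY := schattenNorm_add_le hp (Y - X) X
  rw [sub_add_cancel] at hX
  rw [sub_add_cancel, ← neg_sub, schattenNorm_neg] at hY
  exact abs_sub_le_iff.mpr ⟨by linarith, by linarith⟩

end SchattenNorm

theorem exp_renyiEE_mul_traceNorm {m n : Type*} [Fintype m] [Fintype n] [DecidableEq n]
    {p : ℝ} (hp : 1 < p) (A : Matrix m n ℝ) :
    Real.exp ((1 - p) / p * renyiEE p A) * traceNorm A = schattenNorm p A := by
  have hσ := singularValues_nonneg A
  have hp0 : 0 < p := by linarith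
  rcases (Finset.sum_nonneg fun k _ => hσ k).eq_or_lt with hT0 | hT
  · have hσ0 : ∀ k, singularValues A k = 0 := fun k =>
      (Finset.sum_eq_zero_iff_of_nonneg fun k _ => hσ k).mp hT0.symm k (Finset.mem_univ k)
    simp [traceNorm, schattenNorm, hσ0, Real.zero_rpow hp0.ne',
      Real.zero_rpow (inv_pos.mpr hp0).ne']
  obtain ⟨k, -, hk⟩ := Finset.exists_lt_of_sum_lt (f := 0) (g := singularValues A)
    (s := Finset.univ) (by simpa using hT)
  have hS : 0 < ∑ k, singularValues A k ^ p :=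
    Finset.sum_pos' (fun k _ => Real.rpow_nonneg (hσ k) p)
      ⟨k, Finset.mem_univ k, Real.rpow_pos_of_pos hk p⟩
  have hexp : (1 - p) / p * renyiEE p A
      = Real.log ((∑ k, singularValues A k ^ p) / (∑ k, singularValues A k) ^ p) * (1 / p) := by
    rw [renyiEE]
    field_simp [sub_ne_zero.mpr hp.ne]
  rw [hexp, ← Real.rpow_def_of_pos (div_pos hS (Real.rpow_pos_of_pos hT p)),
    Real.div_rpow hS.le (Real.rpow_nonneg hT.le p), ← Real.rpow_mul hT.le,
    mul_one_div_cancel hp0.ne', Real.rpow_one, traceNorm, div_mul_cancel₀ _ hT.ne', schattenNorm]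

theorem worst_case_bound_by_EE_general
    (p : ℝ) (hp : 1 < p) (L P : ℕ) (hL : 2 ≤ L)
    (W : (Fin L → Fin P) → ℝ)
    (𝒯 : Set ((Fin L → Fin P) → ℝ)) :
    sInf ((fun Wb => ⨆ l : Fin (L - 1),
        schattenNorm p (cutMat hL W l - cutMat hL Wb l)) '' 𝒯)
      ≥ sInf ((fun Wb => ⨆ l : Fin (L - 1),
          |Real.exp ((1 - p) / p * renyiEE p (cutMat hL W l)) * traceNorm (cutMat hL W l)
            - Real.exp ((1 - p) / p * renyiEE p (cutMat hL Wb l))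
              * traceNorm (cutMat hL Wb l)|) '' 𝒯) := by
  simp only [exp_renyiEE_mul_traceNorm hp, Set.image_eq_range]
  refine ciInf_mono ⟨0, ?_⟩ fun Wb => ciSup_mono (Set.finite_range _).bddAbove fun l =>
    abs_schattenNorm_sub_schattenNorm_le hp.le _ _
  rintro _ ⟨Wb, rfl⟩
  exact Real.iSup_nonneg fun l => abs_nonneg _

theorem worst_case_bound_by_EE
    (p : ℝ) (hp : 1 < p) (L P : ℕ) (hL : 2 ≤ L) (hP : 2 ≤ P)
    (W : (Fin L → Fin P) → ℝ)
    (hW : ∀ l : Fin (L - 1), cutMat hL W l ≠ 0)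
    (𝒯 : Set ((Fin L → Fin P) → ℝ)) (h𝒯 : 𝒯.Nonempty)
    (h𝒯' : ∀ Wb ∈ 𝒯, ∀ l : Fin (L - 1), cutMat hL Wb l ≠ 0) :
    sInf ((fun Wb => ⨆ l : Fin (L - 1),
        schattenNorm p (cutMat hL W l - cutMat hL Wb l)) '' 𝒯)
      ≥ sInf ((fun Wb => ⨆ l : Fin (L - 1),
          |Real.exp ((1 - p) / p * renyiEE p (cutMat hL W l)) * traceNorm (cutMat hL W l)
            - Real.exp ((1 - p) / p * renyiEE p (cutMat hL Wb l))
              * traceNorm (cutMat hL Wb l)|) '' 𝒯) :=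
  worst_case_bound_by_EE_general p hp L P hL W 𝒯
end

section
/- Let D ≥ 1 and let W be a nonzero real m×n matrix that factors as W = A·B with A a real m×D matrix and B a real D×n matrix. Then for every α > 1, the α-Rényi entanglement entropy of W satisfies S_α(W) ≤ log D. -/
open scoped BigOperators

/-!
Only the nonzero singular values of `W` enter `S_α`, and their number `c` is `rank W ≤ D`.
For `α > 1` the power-mean inequality gives `(Σ σ_i)^α ≤ c^(α-1) Σ σ_i^α`, so the ratio inside
the logarithm is at least `c^(1-α)`, and dividing its logarithm by `1 - α < 0` gives
`S_α(W) ≤ log c ≤ log D`.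
-/

open Finset
open scoped Matrix

section PowerMean

variable {ι : Type*} [Fintype ι] {f : ι → ℝ} {α : ℝ}

theorem rpow_sum_le_card_support_rpow_mul_sum_rpow (hf : ∀ i, 0 ≤ f i) (hα : 1 ≤ α) :
    (∑ i, f i) ^ α ≤ (#{i | f i ≠ 0} : ℝ) ^ (α - 1) * ∑ i, f i ^ α := by
  have hα0 : α ≠ 0 := by positivity
  have hsupp : ∀ i ∈ univ, f i ^ α ≠ 0 → f i ≠ 0 := fun i _ h hi =>
    h (by rw [hi, Real.zero_rpow hα0])
  rw [← sum_filter_ne_zero, ← sum_filter_of_ne hsupp]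
  exact Real.rpow_sum_le_const_mul_sum_rpow_of_nonneg _ hα fun i _ => hf i

theorem one_div_one_sub_mul_log_sum_rpow_div_le_log_card_support (hf : ∀ i, 0 ≤ f i)
    (hα : 1 < α) :
    1 / (1 - α) * Real.log ((∑ i, f i ^ α) / (∑ i, f i) ^ α) ≤ Real.log #{i | f i ≠ 0} := by
  set c : ℝ := ↑(#{i | f i ≠ 0})
  rcases (sum_nonneg fun i _ => hf i).eq_or_lt with hT | hT
  -- If all `f i` vanish, both sides are `0`: the ratio is `0 / 0 = 0` and `log 0 = 0`.
  · have hzero : ∀ i ∈ univ, f i = 0 := (sum_eq_zero_iff_of_nonneg fun i _ => hf i).mp hT.symm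
    simp [c, hzero, Real.zero_rpow (by positivity : α ≠ 0)]
  have hc : 0 < c := by
    obtain ⟨i, -, hi⟩ := exists_ne_zero_of_sum_ne_zero hT.ne'
    exact Nat.cast_pos.mpr (card_pos.mpr ⟨i, mem_filter.mpr ⟨mem_univ i, hi⟩⟩)
  have hratio : c ^ (1 - α) ≤ (∑ i, f i ^ α) / (∑ i, f i) ^ α := by
    rw [le_div_iff₀ (by positivity), show 1 - α = -(α - 1) by ring, Real.rpow_neg hc.le,
      ← div_eq_inv_mul, div_le_iff₀ (by positivity)]
    simpa [mul_comm] using rpow_sum_le_card_support_rpow_mul_sum_rpow hf hα.le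
  rw [one_div_mul_eq_div, div_le_iff_of_neg (by linarith), mul_comm, ← Real.log_rpow hc]
  exact Real.log_le_log (by positivity) hratio

end PowerMean

section SingularValues

variable {m n : Type*} [Fintype m] [Fintype n] [DecidableEq n]

theorem card_singularValues_ne_zero (A : Matrix m n ℝ) :
    #{i | singularValues A i ≠ 0} = A.rank := by
  have hA : (Aᵀ * A).IsHermitian := by
    rw [← Matrix.conjTranspose_eq_transpose_of_trivial]
    exact Matrix.isHermitian_conjTranspose_mul_self A
  have hpsd : (Aᵀ * A).PosSemidef := by
    rw [← Matrix.conjTranspose_eq_transpose_of_trivial]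
    exact Matrix.posSemidef_conjTranspose_mul_self A
  have hsv : ∀ i, singularValues A i ≠ 0 ↔ hA.eigenvalues i ≠ 0 := fun i =>
    Real.sqrt_ne_zero (hpsd.eigenvalues_nonneg i)
  rw [← Matrix.rank_transpose_mul_self, hA.rank_eq_card_non_zero_eigs, Fintype.card_subtype]
  simp only [hsv]

theorem renyiEE_le_log_rank (A : Matrix m n ℝ) {α : ℝ} (hα : 1 < α) :
    renyiEE α A ≤ Real.log A.rank := by
  rw [← card_singularValues_ne_zero]
  exact one_div_one_sub_mul_log_sum_rpow_div_le_log_card_support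
    (fun i => Real.sqrt_nonneg _) hα

end SingularValues

theorem Real.log_natCast_monotone : Monotone fun n : ℕ => Real.log n := by
  intro a b hab
  rcases a.eq_zero_or_pos with rfl | ha
  · simpa using Real.log_natCast_nonneg b
  · exact Real.log_le_log (by positivity) (by exact_mod_cast hab)

theorem renyiEE_le_log_of_factorization_general
    (m n D : ℕ)
    (A : Matrix (Fin m) (Fin D) ℝ) (B : Matrix (Fin D) (Fin n) ℝ)
    (W : Matrix (Fin m) (Fin n) ℝ) (hW : W = A * B)
    (α : ℝ) (hα : 1 < α) :
    renyiEE α W ≤ Real.log D := by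
  have hrank : W.rank ≤ D := hW ▸ (Matrix.rank_mul_le_left A B).trans (Matrix.rank_le_width A)
  exact (renyiEE_le_log_rank W hα).trans (Real.log_natCast_monotone hrank)

theorem renyiEE_le_log_of_factorization
    (m n D : ℕ) (hD : 1 ≤ D)
    (A : Matrix (Fin m) (Fin D) ℝ) (B : Matrix (Fin D) (Fin n) ℝ)
    (W : Matrix (Fin m) (Fin n) ℝ) (hW : W = A * B) (hW0 : W ≠ 0)
    (α : ℝ) (hα : 1 < α) :
    renyiEE α W ≤ Real.log D :=
  renyiEE_le_log_of_factorization_general m n D A B W hW α hα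
end
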